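/- Canonical mechanism nontermination: in the canonical clandestine game, for any state w, coalition C, and formula φ (serving as an operation), there exists a state u with (w,C,φ,u) ∈ M; in particular, if H_C φ ∈ hd(w) then the set {K_C φ} ∪ {ψ : K_{𝒜∖C} ψ ∈ hd(w)} is consistent. -/

import Mathlib

/-- Formulas of the logic of clandestine operations: propositional variables,
falsum, negation, implication, distributed knowledge `know C φ` and
clandestine power `how C φ` for coalitions `C ⊆ Ag`. -/
inductive Formula (α : Type) (Ag : Type) : Type
  | var  : α → Formula α Ag
  | bot  : Formula α Ag
  | neg  : Formula α Ag → Formula α Ag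
  | imp  : Formula α Ag → Formula α Ag → Formula α Ag
  | know : Set Ag → Formula α Ag → Formula α Ag
  | how  : Set Ag → Formula α Ag → Formula α Ag

namespace Formula

/-- Defined disjunction. -/
def or {α Ag : Type} (φ ψ : Formula α Ag) : Formula α Ag := imp (neg φ) ψ

/-- Defined verum. -/
def top {α Ag : Type} : Formula α Ag := neg bot

/-- Boolean evaluation treating variables and modal formulas as atoms. -/
def eval {α Ag : Type} (v : Formula α Ag → Bool) : Formula α Ag → Bool
  | var p => v (var p)
  | bot => false
  | neg φ => !(eval v φ)
  | imp φ ψ => !(eval v φ) || eval v ψ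
  | know C φ => v (know C φ)
  | how C φ => v (how C φ)

end Formula

/-- A propositional tautology: true under every Boolean valuation of its
atoms (variables and modal subformulas). -/
def Tautology {α Ag : Type} (φ : Formula α Ag) : Prop :=
  ∀ v, φ.eval v = true

/-- Theorems of the logic of clandestine operations. -/
inductive Prov {α Ag : Type} : Formula α Ag → Prop
  | taut {φ} : Tautology φ → Prov φ
  | truth (C : Set Ag) (φ) : Prov (.imp (.know C φ) φ)
  | negIntro (C : Set Ag) (φ) :
      Prov (.imp (.neg (.know C φ)) (.know C (.neg (.know C φ))))
  | distrib (C : Set Ag) (φ ψ) :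
      Prov (.imp (.know C (.imp φ ψ)) (.imp (.know C φ) (.know C ψ)))
  | mono {C' C : Set Ag} (φ) : C' ⊆ C → Prov (.imp (.know C' φ) (.know C φ))
  | stratIntro (C : Set Ag) (φ) : Prov (.imp (.how C φ) (.know C (.how C φ)))
  | cia {C I A : Set Ag} (φ ψ) : C ∩ (I ∪ A) = ∅ →
      Prov (.imp
        (.know (C ∪ I) (.know (A ∪ I) (.imp (.know C φ) (.know (C ∪ I) ψ))))
        (.imp (.how C φ) (.how (C ∪ I) ψ)))
  | nonterm (C : Set Ag) : Prov (.neg (.how C .bot))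
  | emptyCoal (φ : Formula α Ag) : Prov (.neg (.how ∅ φ))
  | mp {φ ψ} : Prov (.imp φ ψ) → Prov φ → Prov ψ
  | necK (C : Set Ag) {φ} : Prov φ → Prov (.know C φ)
  | necH {C : Set Ag} {φ} : C ≠ ∅ → Prov φ → Prov (.how C φ)

/-- Derivability from a set of hypotheses `X`: from theorems of the system
and members of `X` using Modus Ponens only. -/
inductive ProvFrom {α Ag : Type} (X : Set (Formula α Ag)) : Formula α Ag → Prop
  | hyp {φ} : φ ∈ X → ProvFrom X φ
  | thm {φ} : Prov φ → ProvFrom X φ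
  | mp {φ ψ} : ProvFrom X (.imp φ ψ) → ProvFrom X φ → ProvFrom X ψ

/-- A set of formulas is consistent if falsum is not derivable from it. -/
def Consistent {α Ag : Type} (X : Set (Formula α Ag)) : Prop :=
  ¬ ProvFrom X .bot

/-- Maximal consistent set of formulas. -/
def MCS {α Ag : Type} (X : Set (Formula α Ag)) : Prop :=
  Consistent X ∧ ∀ φ : Formula α Ag, φ ∈ X ∨ .neg φ ∈ X

/-- Canonical states are lists of (coalition, maximal consistent set) steps,
most recent step first, rooted at the fixed maximal consistent set `X₀`.
`hd X₀ w` is the maximal consistent set labelling the node `w`. -/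
def hd {α Ag : Type} (X₀ : Set (Formula α Ag)) :
    List (Set Ag × Set (Formula α Ag)) → Set (Formula α Ag)
  | [] => X₀
  | (_, X) :: _ => X

/-- The canonical-state condition: every set along the path is maximal
consistent and contains everything known (to the edge coalition) at its
parent. -/
def IsCanState {α Ag : Type} (X₀ : Set (Formula α Ag)) :
    List (Set Ag × Set (Formula α Ag)) → Prop
  | [] => True
  | (C, X) :: w => IsCanState X₀ w ∧ MCS X ∧
      {φ : Formula α Ag | Formula.know C φ ∈ hd X₀ w} ⊆ X

/-- Canonical indistinguishability for agent `a`: all edges on the simple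
tree path between `w` and `w'` (through a common ancestor `v`) are labelled
with a coalition containing `a`. -/
def CSim {α Ag : Type} (a : Ag)
    (w w' : List (Set Ag × Set (Formula α Ag))) : Prop :=
  ∃ v, v <:+ w ∧ v <:+ w' ∧
    (∀ p ∈ w.take (w.length - v.length), a ∈ p.1) ∧
    (∀ p ∈ w'.take (w'.length - v.length), a ∈ p.1)

/-- Canonical coalition indistinguishability. -/
def CSimC {α Ag : Type} (C : Set Ag)
    (w w' : List (Set Ag × Set (Formula α Ag))) : Prop :=
  ∀ a ∈ C, CSim a w w'

/-- The canonical mechanism: `(w, C, φ, u) ∈ M` iff `w ∼_{𝒜∖C} u` and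
`H_C φ ∈ hd w` implies `K_C φ ∈ hd u`. -/
def CanM {α Ag : Type} (X₀ : Set (Formula α Ag))
    (w : List (Set Ag × Set (Formula α Ag))) (C : Set Ag) (φ : Formula α Ag)
    (u : List (Set Ag × Set (Formula α Ag))) : Prop :=
  CSimC Cᶜ w u ∧ (Formula.how C φ ∈ hd X₀ w → Formula.know C φ ∈ hd X₀ u)

/-!
If `H_C φ ∈ hd w`, the set `{K_C φ} ∪ {ψ | K_{𝒜∖C} ψ ∈ hd w}` is consistent: otherwise
`{ψ | K_{𝒜∖C} ψ ∈ hd w} ⊢ ¬K_C φ`, so `K_{𝒜∖C} ¬K_C φ ∈ hd w`, and the derivable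
principle `K_E ¬K_F φ → ¬H_F φ` (for disjoint `E`, `F`) contradicts `H_C φ ∈ hd w`.
Lindenbaum's lemma extends this set to a maximal consistent `Y`, and the state `u` obtained
from `w` by one edge labelled `𝒜∖C` into `Y` is canonical, indistinguishable from `w` for
`𝒜∖C`, and has `K_C φ ∈ hd u`. If `H_C φ ∉ hd w`, take `u = w`.
-/

open Formula

variable {α Ag : Type}

namespace ProvFrom

variable {X Y : Set (Formula α Ag)} {φ ψ χ : Formula α Ag}

theorem mono (h : ProvFrom X φ) (hXY : X ⊆ Y) : ProvFrom Y φ := by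
  induction h with
  | hyp h => exact .hyp (hXY h)
  | thm h => exact .thm h
  | mp _ _ ih₁ ih₂ => exact .mp ih₁ ih₂

theorem exists_finite_subset (h : ProvFrom X φ) : ∃ S ⊆ X, S.Finite ∧ ProvFrom S φ := by
  induction h with
  | @hyp φ h => exact ⟨{φ}, by simpa, Set.finite_singleton _, .hyp rfl⟩
  | thm h => exact ⟨∅, Set.empty_subset _, Set.finite_empty, .thm h⟩
  | mp _ _ ih₁ ih₂ =>
    obtain ⟨S₁, hS₁, hfin₁, h₁⟩ := ih₁
    obtain ⟨S₂, hS₂, hfin₂, h₂⟩ := ih₂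
    exact ⟨S₁ ∪ S₂, Set.union_subset hS₁ hS₂, hfin₁.union hfin₂,
      .mp (h₁.mono Set.subset_union_left) (h₂.mono Set.subset_union_right)⟩

theorem taut_mp (h : Tautology (φ.imp ψ)) (hφ : ProvFrom X φ) : ProvFrom X ψ :=
  .mp (.thm (.taut h)) hφ

theorem taut_mp₂ (h : Tautology (φ.imp (ψ.imp χ))) (hφ : ProvFrom X φ) (hψ : ProvFrom X ψ) :
    ProvFrom X χ :=
  .mp (taut_mp h hφ) hψ

theorem imp_of_insert (h : ProvFrom (insert φ X) ψ) : ProvFrom X (φ.imp ψ) := by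
  induction h with
  | @hyp χ h =>
    rcases h with rfl | h
    · exact .thm (.taut fun v => by simp only [eval]; grind)
    · exact taut_mp (ψ := φ.imp χ) (fun v => by simp only [eval]; grind) (.hyp h)
  | @thm χ h => exact taut_mp (fun v => by simp only [eval]; grind) (.thm h)
  | mp _ _ ih₁ ih₂ => exact taut_mp₂ (fun v => by simp only [eval]; grind) ih₁ ih₂

end ProvFrom

namespace Prov

variable {φ ψ χ : Formula α Ag}

theorem imp_trans (h₁ : Prov (φ.imp ψ)) (h₂ : Prov (ψ.imp χ)) : Prov (φ.imp χ) :=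
  .mp (.mp (.taut fun v => by simp only [eval]; grind) h₁) h₂

theorem know_imp_know (E : Set Ag) (h : Prov (φ.imp ψ)) : Prov ((know E φ).imp (know E ψ)) :=
  .mp (.distrib E φ ψ) (.necK E h)

theorem know_imp_know_know (E : Set Ag) (φ : Formula α Ag) :
    Prov ((know E φ).imp (know E (know E φ))) := by
  have hT : Prov ((know E φ).imp (neg (know E (neg (know E φ))))) :=
    .mp (.taut fun v => by simp only [eval]; grind) (truth E (neg (know E φ)))
  have h5 : Prov ((neg (know E (neg (know E φ)))).imp (know E φ)) :=
    .mp (.taut fun v => by simp only [eval]; grind) (negIntro E φ)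
  exact hT.imp_trans <| (negIntro E _).imp_trans <| know_imp_know E h5

/-- From `K_E ¬K_F φ`, introspection and monotonicity give `K_{F∪E} K_E (K_F φ → K_{F∪E} ⊥)`,
so axiom `cia` turns `H_F φ` into `H_{F∪E} ⊥`, which axiom `nonterm` refutes. -/
theorem know_neg_know_imp_neg_how {E F : Set Ag} (hEF : Disjoint E F) (φ : Formula α Ag) :
    Prov ((know E (neg (know F φ))).imp (neg (how F φ))) := by
  have hcia : Prov ((know (F ∪ E) (know E ((know F φ).imp (know (F ∪ E) bot)))).imp
      ((how F φ).imp (how (F ∪ E) bot))) := by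
    simpa using cia (I := E) (A := ∅) φ bot
      (by simpa [Set.disjoint_iff_inter_eq_empty] using hEF.symm)
  have hchain : Prov ((know E (neg (know F φ))).imp ((how F φ).imp (how (F ∪ E) bot))) :=
    (know_imp_know_know E _).imp_trans <| (mono _ Set.subset_union_right).imp_trans <|
      (know_imp_know _ <| know_imp_know E <| .taut fun v => by
        simp only [eval]; grind).imp_trans hcia
  exact .mp (.mp (.taut fun v => by simp only [eval]; grind) hchain) (nonterm (F ∪ E))

end Prov

namespace MCS

variable {Y : Set (Formula α Ag)} {φ ψ : Formula α Ag}

theorem mem_of_provFrom (hY : MCS Y) (h : ProvFrom Y φ) : φ ∈ Y :=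
  (hY.2 φ).resolve_right fun hneg =>
    hY.1 (.taut_mp₂ (fun v => by simp only [eval]; grind) (.hyp hneg) h)

theorem mem_of_prov (hY : MCS Y) (h : Prov φ) : φ ∈ Y :=
  hY.mem_of_provFrom (.thm h)

theorem mem_of_imp_mem (hY : MCS Y) (himp : φ.imp ψ ∈ Y) (hφ : φ ∈ Y) : ψ ∈ Y :=
  hY.mem_of_provFrom (.mp (.hyp himp) (.hyp hφ))

theorem know_mem_of_provFrom (hY : MCS Y) {E : Set Ag} (h : ProvFrom {ψ | know E ψ ∈ Y} φ) :
    know E φ ∈ Y := by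
  induction h with
  | hyp h => exact h
  | thm h => exact hY.mem_of_prov (.necK E h)
  | mp _ _ ih₁ ih₂ =>
    exact hY.mem_of_imp_mem (hY.mem_of_imp_mem (hY.mem_of_prov (.distrib ..)) ih₁) ih₂

theorem consistent_know_union_of_how_mem (hY : MCS Y) {E F : Set Ag} (hEF : Disjoint E F)
    (hH : how F φ ∈ Y) : Consistent ({know F φ} ∪ {ψ | know E ψ ∈ Y}) := by
  intro hbot
  rw [Set.singleton_union] at hbot
  have hK : know E (neg (know F φ)) ∈ Y :=
    hY.know_mem_of_provFrom <| .taut_mp (fun v => by simp only [eval]; grind) hbot.imp_of_insert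
  have hnegH : neg (how F φ) ∈ Y :=
    hY.mem_of_imp_mem (hY.mem_of_prov (Prov.know_neg_know_imp_neg_how hEF φ)) hK
  exact hY.1 (.taut_mp₂ (fun v => by simp only [eval]; grind) (.hyp hnegH) (.hyp hH))

theorem of_maximal (hY : Maximal Consistent Y) : MCS Y := by
  refine ⟨hY.prop, fun φ => by_contra fun hnone => ?_⟩
  have hinc : ∀ χ ∉ Y, ¬ Consistent (insert χ Y) := fun χ hχ hcons =>
    hχ (hY.mem_of_prop_insert hcons)
  obtain ⟨hφ, hnegφ⟩ := not_or.mp hnone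
  exact hY.prop (.taut_mp₂ (fun v => by simp only [eval]; grind)
    (not_not.mp (hinc _ hφ)).imp_of_insert (not_not.mp (hinc _ hnegφ)).imp_of_insert)

end MCS

theorem isOfFiniteCharacter_consistent :
    Order.IsOfFiniteCharacter {X : Set (Formula α Ag) | Consistent X} := by
  refine fun X => ⟨fun hX S hSX _ hS => hX (hS.mono hSX), fun hfin hX => ?_⟩
  obtain ⟨S, hSX, hS, hbot⟩ := hX.exists_finite_subset
  exact hfin S hSX hS hbot

theorem exists_mcs_superset {X : Set (Formula α Ag)} (hX : Consistent X) :
    ∃ Y, X ⊆ Y ∧ MCS Y := by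
  obtain ⟨Y, hXY, hY⟩ := isOfFiniteCharacter_consistent.exists_maximal (x := X) hX
  exact ⟨Y, hXY, MCS.of_maximal hY⟩

theorem IsCanState.mcs_hd {X₀ : Set (Formula α Ag)} (hX₀ : MCS X₀) :
    ∀ {w : List (Set Ag × Set (Formula α Ag))}, IsCanState X₀ w → MCS (hd X₀ w)
  | [], _ => hX₀
  | _ :: _, hw => hw.2.1

namespace CSimC

variable (C : Set Ag) (w : List (Set Ag × Set (Formula α Ag)))

theorem refl : CSimC C w w :=
  fun _ _ => ⟨w, List.suffix_refl w, List.suffix_refl w, by simp, by simp⟩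

theorem cons {E : Set Ag} (hCE : C ⊆ E) (Y : Set (Formula α Ag)) : CSimC C w ((E, Y) :: w) :=
  fun _ ha => ⟨w, List.suffix_refl w, List.suffix_cons _ _, by simp, by simpa using hCE ha⟩

end CSimC

/-- Canonical mechanism nontermination: for any canonical state `w`, coalition
`C`, and formula `φ`, there is a canonical state `u` with `(w,C,φ,u) ∈ M`;
moreover, if `H_C φ ∈ hd w` then `{K_C φ} ∪ {ψ : K_{𝒜∖C} ψ ∈ hd w}` is
consistent. -/
theorem canonical_nontermination {α Ag : Type} {X₀ : Set (Formula α Ag)}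
    (hX₀ : MCS X₀) {w : List (Set Ag × Set (Formula α Ag))}
    (hw : IsCanState X₀ w) (C : Set Ag) (φ : Formula α Ag) :
    (∃ u, IsCanState X₀ u ∧ CanM X₀ w C φ u) ∧
    (Formula.how C φ ∈ hd X₀ w →
      Consistent ({Formula.know C φ} ∪
        {ψ | Formula.know Cᶜ ψ ∈ hd X₀ w})) := by
  have hcons := (hw.mcs_hd hX₀).consistent_know_union_of_how_mem (φ := φ)
    (disjoint_compl_left (a := C))
  refine ⟨?_, hcons⟩
  by_cases hH : how C φ ∈ hd X₀ w
  · obtain ⟨Y, hXY, hY⟩ := exists_mcs_superset (hcons hH)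
    exact ⟨(Cᶜ, Y) :: w, ⟨hw, hY, fun ψ hψ => hXY (.inr hψ)⟩,
      CSimC.cons _ _ subset_rfl Y, fun _ => hXY (.inl rfl)⟩
  · exact ⟨w, hw, CSimC.refl _ _, fun h => absurd h hH⟩
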